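/- There exists γ₀ > 0, depending only on the dimension d, such that for every 0 < γ ≤ γ₀, every finite rectangle Λ ⊂ ℤ^d, and every δ with γ^{1/4}/4 < δ ≤ 1, the minimum level spacing of H(u) satisfies P( min_{α ≠ β} |E_α − E_β| < δ ) ≤ 3·√δ·|Λ|², where E_1, …, E_{2|Λ|} are the eigenvalues of H(u) counted with multiplicity and the minimum is over pairs of distinct indices. -/

import Mathlib

open Matrix MeasureTheory

/-- The uniform probability measure on `[-1,1]`. -/
noncomputable def unif : Measure ℝ :=
  ((2 : NNReal))⁻¹ • (volume.restrict (Set.Icc (-1 : ℝ) 1))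

instance : IsProbabilityMeasure unif := by
  constructor
  rw [unif, Measure.smul_apply, Measure.restrict_apply_univ, Real.volume_Icc]
  norm_num
  rw [ENNReal.smul_def]
  simp [ENNReal.inv_mul_cancel]

/-- The product of uniform measures on `[-1,1]^ι` (i.i.d. uniform random variables). -/
noncomputable def unifPi (ι : Type*) [Fintype ι] : Measure (ι → ℝ) :=
  Measure.pi fun _ => unif

/-- The ℓ¹ distance `|x-y| = Σᵢ |xᵢ-yᵢ|` on `ℤ^d`, as a natural number. -/
def dist1 {d : ℕ} (x y : Fin d → ℤ) : ℕ := ∑ i, (x i - y i).natAbs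

/-- The random block Hamiltonian: diagonal 2×2 block `[[u_x,1],[1,-u_x]]` at each
position `x ∈ Λ`, and block `γ·I₂` between nearest-neighbor positions. -/
noncomputable def Ham (d : ℕ) (γ : ℝ) (Λ : Finset (Fin d → ℤ)) (u : {x // x ∈ Λ} → ℝ) :
    Matrix ({x // x ∈ Λ} × Fin 2) ({x // x ∈ Λ} × Fin 2) ℝ := fun s t =>
  if s.1 = t.1 then
    (if s.2 = t.2 then (if s.2 = 0 then u s.1 else -u s.1) else 1)
  else if dist1 (s.1 : Fin d → ℤ) (t.1 : Fin d → ℤ) = 1 then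
    (if s.2 = t.2 then γ else 0)
  else 0

/-!
Write `H(u) = H(u)|_{γ=0} + V` with `V` the nearest-neighbour hopping. The decoupled part has the
explicit levels `±√(1 + u_x²)`, and the absolute row and column sums of `V` are at most `R = 3^d γ`,
so by the Schur test `‖V‖ ≤ R` and every decoupled level lies within `R` of an eigenvalue of `H(u)`.
If the decoupled levels are pairwise more than `δ + 2R` apart, this assignment is a bijection and the
eigenvalues of `H(u)` are pairwise more than `δ` apart. Levels of opposite sign are at least `2`
apart, so only `|√(1 + u_x²) - √(1 + u_y²)| ≤ ε := δ + 2R` for some pair of sites `x ≠ y` can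
spoil this. For `γ ≤ γ₀` one has `ε ≤ 3δ/2`, and since `√(1 + b²)` is within `ε` of a fixed value
only for `b²` in an interval of length `6ε`, each pair contributes probability at most
`√(6ε) ≤ 3√δ`; a union bound over the `|Λ|²` pairs finishes the proof.
-/

open scoped RealInnerProductSpace

open ProbabilityTheory

theorem LinearMap.IsSymmetric.exists_abs_eigenvalues_sub_le {E : Type*} [NormedAddCommGroup E]
    [InnerProductSpace ℝ E] [FiniteDimensional ℝ E] {T : E →ₗ[ℝ] E} (hT : T.IsSymmetric)
    {n : ℕ} (hn : Module.finrank ℝ E = n) {μ r : ℝ} {v : E} (hv : v ≠ 0)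
    (h : ‖T v - μ • v‖ ≤ r * ‖v‖) : ∃ i, |hT.eigenvalues hn i - μ| ≤ r := by
  set b := hT.eigenvectorBasis hn
  have hcoeff : ∀ i, ⟪b i, T v - μ • v⟫ = (hT.eigenvalues hn i - μ) * ⟪b i, v⟫ := fun i => by
    rw [inner_sub_right, real_inner_smul_right, ← hT, hT.apply_eigenvectorBasis]
    simp [b, real_inner_smul_left, sub_mul]
  have hr : 0 ≤ r := nonneg_of_mul_nonneg_left ((norm_nonneg _).trans h) (norm_pos_iff.2 hv)
  obtain ⟨i₀, hi₀⟩ : ∃ i, ⟪b i, v⟫ ≠ 0 := by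
    by_contra! h0
    exact hv (by simpa [h0, eq_comm] using b.sum_sq_inner_right v)
  by_contra! hfar
  have hlt : (r * ‖v‖) ^ 2 < ‖T v - μ • v‖ ^ 2 := by
    rw [mul_pow, ← b.sum_sq_inner_right v, ← b.sum_sq_inner_right (T v - μ • v), Finset.mul_sum]
    simp_rw [hcoeff, mul_pow]
    have hsq : ∀ i, r ^ 2 < (hT.eigenvalues hn i - μ) ^ 2 := fun i =>
      sq_lt_sq.2 ((abs_of_nonneg hr).trans_lt (hfar i))
    exact Finset.sum_lt_sum (fun i _ => mul_le_mul_of_nonneg_right (hsq i).le (sq_nonneg _))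
      ⟨i₀, Finset.mem_univ _, mul_lt_mul_of_pos_right (hsq i₀) (by positivity)⟩
  exact hlt.not_ge (pow_le_pow_left₀ (norm_nonneg _) h 2)

theorem Matrix.IsHermitian.exists_abs_eigenvalues_sub_le {n : Type*} [Fintype n] [DecidableEq n]
    {A : Matrix n n ℝ} (hA : A.IsHermitian) {μ r : ℝ} {x : EuclideanSpace ℝ n} (hx : x ≠ 0)
    (h : ‖toEuclideanLin A x - μ • x‖ ≤ r * ‖x‖) : ∃ i, |hA.eigenvalues i - μ| ≤ r := by
  obtain ⟨i, hi⟩ := (isSymmetric_toEuclideanLin_iff.mpr hA).exists_abs_eigenvalues_sub_le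
    finrank_euclideanSpace hx h
  exact ⟨Fintype.equivOfCardEq (Fintype.card_fin _) i, by
    simpa [Matrix.IsHermitian.eigenvalues, Matrix.IsHermitian.eigenvalues₀] using hi⟩

theorem Matrix.norm_toEuclideanLin_le_of_sum_abs_le {m n : Type*} [Fintype m] [Fintype n]
    [DecidableEq n] (M : Matrix m n ℝ) {R : ℝ} (hR : 0 ≤ R) (hrow : ∀ i, ∑ j, |M i j| ≤ R)
    (hcol : ∀ j, ∑ i, |M i j| ≤ R) (x : EuclideanSpace ℝ n) :
    ‖toEuclideanLin M x‖ ≤ R * ‖x‖ := by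
  refine le_of_sq_le_sq ?_ (by positivity)
  simp only [EuclideanSpace.real_norm_sq_eq, mul_pow, Matrix.ofLp_toLpLin, Matrix.toLin'_apply]
  calc ∑ i, (M *ᵥ x.ofLp) i ^ 2 ≤ ∑ i, (∑ j, |M i j|) * ∑ j, |M i j| * x j ^ 2 := by
        gcongr with i
        refine Finset.sum_sq_le_sum_mul_sum_of_sq_le_mul _ (fun _ _ => abs_nonneg _)
          (fun _ _ => by positivity) fun j _ => ?_
        rw [← mul_assoc, ← sq, sq_abs, mul_pow]
    _ ≤ R * ∑ i, ∑ j, |M i j| * x j ^ 2 := by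
        rw [Finset.mul_sum]
        exact Finset.sum_le_sum fun i _ =>
          mul_le_mul_of_nonneg_right (hrow i) (Finset.sum_nonneg fun j _ => by positivity)
    _ = R * ∑ j, (∑ i, |M i j|) * x j ^ 2 := by
        rw [Finset.sum_comm]; simp_rw [Finset.sum_mul]
    _ ≤ R * ∑ j, R * x j ^ 2 := by gcongr with j; exact hcol j
    _ = R ^ 2 * ∑ j, x j ^ 2 := by rw [← Finset.mul_sum]; ring

theorem pairwise_lt_abs_sub_of_exists_near {ι : Type*} [Finite ι] {lam μ : ι → ℝ} {R δ : ℝ}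
    (hδ : 0 ≤ δ) (hnear : ∀ j, ∃ α, |lam α - μ j| ≤ R)
    (hsep : Pairwise fun j k => δ + 2 * R < |μ j - μ k|) :
    Pairwise fun α β => δ < |lam α - lam β| := by
  choose φ hφ using hnear
  have hφ_inj : φ.Injective := fun j k hjk => by
    by_contra hne
    have h₁ : |lam (φ k) - μ j| ≤ R := hjk ▸ hφ j
    have := abs_sub_le (μ j) (lam (φ k)) (μ k)
    rw [abs_sub_comm (μ j) (lam (φ k))] at this
    linarith [hsep hne, hφ k]
  have hφ_surj : φ.Surjective := Finite.injective_iff_surjective.1 hφ_inj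
  intro α β hαβ
  obtain ⟨j, rfl⟩ := hφ_surj α
  obtain ⟨k, rfl⟩ := hφ_surj β
  have hjk : j ≠ k := fun h => hαβ (congrArg φ h)
  have h₁ := abs_sub_le (μ j) (lam (φ j)) (μ k)
  have h₂ := abs_sub_le (lam (φ j)) (lam (φ k)) (μ k)
  rw [abs_sub_comm (μ j) (lam (φ j))] at h₁
  linarith [hsep hjk, hφ j, hφ k]

theorem dist1_comm {d : ℕ} (x y : Fin d → ℤ) : dist1 x y = dist1 y x := by
  simp only [dist1, ← Int.natAbs_neg (x _ - y _), neg_sub]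

theorem mem_Icc_of_dist1_le_one {d : ℕ} {x y : Fin d → ℤ} (h : dist1 x y ≤ 1) :
    y ∈ Finset.Icc (x - 1) (x + 1) := by
  have hcoord : ∀ i, (x i - y i).natAbs ≤ 1 := fun i =>
    (Finset.single_le_sum (f := fun i => (x i - y i).natAbs) (fun _ _ => Nat.zero_le _)
      (Finset.mem_univ i)).trans h
  simp only [Finset.mem_Icc, Pi.le_def, Pi.sub_apply, Pi.add_apply, Pi.one_apply]
  exact ⟨fun i => by have := hcoord i; omega, fun i => by have := hcoord i; omega⟩

theorem card_filter_dist1_eq_one_le {d : ℕ} (Λ : Finset (Fin d → ℤ)) (x : Fin d → ℤ) :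
    (Finset.univ.filter fun y : {y // y ∈ Λ} => dist1 x y = 1).card ≤ 3 ^ d := by
  calc _ ≤ (Finset.Icc (x - 1) (x + 1)).card :=
        Finset.card_le_card_of_injOn Subtype.val
          (fun y hy => mem_Icc_of_dist1_le_one (Finset.mem_filter.1 hy).2.le)
          Subtype.val_injective.injOn
    _ = 3 ^ d := by
        simp only [Pi.card_Icc, Pi.sub_apply, Pi.add_apply, Pi.one_apply, Int.card_Icc]
        simp [show ∀ a : ℤ, (a + 1 + 1 - (a - 1)).toNat = 3 by omega]

noncomputable def hopping (d : ℕ) (γ : ℝ) (Λ : Finset (Fin d → ℤ)) :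
    Matrix ({x // x ∈ Λ} × Fin 2) ({x // x ∈ Λ} × Fin 2) ℝ := fun s t =>
  if dist1 (s.1 : Fin d → ℤ) t.1 = 1 ∧ s.2 = t.2 then γ else 0

theorem ham_eq_add_hopping (d : ℕ) (γ : ℝ) (Λ : Finset (Fin d → ℤ)) (u : {x // x ∈ Λ} → ℝ) :
    Ham d γ Λ u = Ham d 0 Λ u + hopping d γ Λ := by
  ext s t
  by_cases hst : s.1 = t.1
  · simp [Ham, hopping, hst, dist1]
  · by_cases h1 : dist1 (s.1 : Fin d → ℤ) t.1 = 1 <;> by_cases h2 : s.2 = t.2 <;>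
      simp [Ham, hopping, hst, h1, h2]

theorem hopping_comm (d : ℕ) (γ : ℝ) (Λ : Finset (Fin d → ℤ)) (s t : {x // x ∈ Λ} × Fin 2) :
    hopping d γ Λ s t = hopping d γ Λ t s := by
  simp only [hopping, dist1_comm (s.1 : Fin d → ℤ), eq_comm (a := s.2)]

theorem sum_abs_hopping_le {d : ℕ} {γ : ℝ} (hγ : 0 ≤ γ) (Λ : Finset (Fin d → ℤ))
    (s : {x // x ∈ Λ} × Fin 2) : ∑ t, |hopping d γ Λ s t| ≤ 3 ^ d * γ := by
  calc ∑ t, |hopping d γ Λ s t|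
      = ∑ y : {x // x ∈ Λ}, if dist1 (s.1 : Fin d → ℤ) y = 1 then γ else 0 := by
        simp [hopping, Fintype.sum_prod_type, apply_ite, abs_of_nonneg hγ, ite_and]
    _ ≤ 3 ^ d * γ := by
        rw [Finset.sum_ite, Finset.sum_const, Finset.sum_const_zero, add_zero, nsmul_eq_mul]
        gcongr
        exact_mod_cast card_filter_dist1_eq_one_le Λ s.1

noncomputable def decoupledLevel {ι : Type*} (u : ι → ℝ) (s : ι × Fin 2) : ℝ :=
  if s.2 = 0 then √(1 + u s.1 ^ 2) else -√(1 + u s.1 ^ 2)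

/-- `(1, μ - u)` is an eigenvector of `[[u, 1], [1, -u]]` whenever `μ² = 1 + u²`. -/
noncomputable def decoupledVec {ι : Type*} [DecidableEq ι] (u : ι → ℝ) (s : ι × Fin 2) :
    ι × Fin 2 → ℝ := fun t =>
  if t.1 = s.1 then (if t.2 = 0 then 1 else decoupledLevel u s - u s.1) else 0

theorem decoupledLevel_sq {ι : Type*} (u : ι → ℝ) (s : ι × Fin 2) :
    decoupledLevel u s ^ 2 = 1 + u s.1 ^ 2 := by
  unfold decoupledLevel; split_ifs <;> simp [Real.sq_sqrt, add_nonneg, sq_nonneg]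

theorem decoupledVec_ne_zero {ι : Type*} [DecidableEq ι] (u : ι → ℝ) (s : ι × Fin 2) :
    decoupledVec u s ≠ 0 := fun h => by simpa [decoupledVec] using congrFun h (s.1, 0)

theorem ham_zero_mulVec_decoupledVec {d : ℕ} {Λ : Finset (Fin d → ℤ)} (u : {x // x ∈ Λ} → ℝ)
    (s : {x // x ∈ Λ} × Fin 2) :
    Ham d 0 Λ u *ᵥ decoupledVec u s = decoupledLevel u s • decoupledVec u s := by
  have hμ := decoupledLevel_sq u s
  ext ⟨y, k⟩
  by_cases hy : y = s.1
  · subst hy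
    fin_cases k <;> simp [mulVec, dotProduct, Fintype.sum_prod_type, Ham, decoupledVec]
    nlinarith
  · simp [mulVec, dotProduct, Fintype.sum_prod_type, Ham, decoupledVec, hy]

theorem pairwise_lt_abs_decoupledLevel_sub {ι : Type*} {u : ι → ℝ} {η : ℝ} (hη : η < 2)
    (hu : Pairwise fun x y => η < |√(1 + u x ^ 2) - √(1 + u y ^ 2)|) :
    Pairwise fun s t : ι × Fin 2 => η < |decoupledLevel u s - decoupledLevel u t| := by
  rintro ⟨x, k⟩ ⟨y, l⟩ hne
  have hx : 1 ≤ √(1 + u x ^ 2) := Real.one_le_sqrt.2 (by nlinarith)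
  have hy : 1 ≤ √(1 + u y ^ 2) := Real.one_le_sqrt.2 (by nlinarith)
  have hxy : k = l → x ≠ y := fun hkl hxy => hne (by rw [hkl, hxy])
  fin_cases k <;> fin_cases l <;> simp only [decoupledLevel] at hxy ⊢ <;> norm_num at hxy ⊢
  · exact hu hxy
  · rw [abs_of_pos (by linarith)]; linarith
  · rw [abs_of_neg (by linarith)]; linarith
  · rw [neg_add_eq_sub, abs_sub_comm]; exact hu hxy

theorem ham_pairwise_lt_abs_eigenvalues_sub {d : ℕ} {γ δ : ℝ} (hγ : 0 ≤ γ) (hδ : 0 ≤ δ)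
    (hsmall : δ + 2 * (3 ^ d * γ) < 2) {Λ : Finset (Fin d → ℤ)} {u : {x // x ∈ Λ} → ℝ}
    (hu : Pairwise fun x y => δ + 2 * (3 ^ d * γ) < |√(1 + u x ^ 2) - √(1 + u y ^ 2)|)
    (hH : (Ham d γ Λ u).IsHermitian) :
    Pairwise fun α β => δ < |hH.eigenvalues α - hH.eigenvalues β| := by
  refine pairwise_lt_abs_sub_of_exists_near hδ (fun s => ?_)
    (pairwise_lt_abs_decoupledLevel_sub hsmall hu)
  refine hH.exists_abs_eigenvalues_sub_le (x := WithLp.toLp 2 (decoupledVec u s))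
    (by simpa using decoupledVec_ne_zero u s) ?_
  have hres : toEuclideanLin (Ham d γ Λ u) (WithLp.toLp 2 (decoupledVec u s)) -
      decoupledLevel u s • WithLp.toLp 2 (decoupledVec u s) =
      toEuclideanLin (hopping d γ Λ) (WithLp.toLp 2 (decoupledVec u s)) := by
    rw [ham_eq_add_hopping, map_add, LinearMap.add_apply, Matrix.toLpLin_toLp,
      Matrix.toLin'_apply, ham_zero_mulVec_decoupledVec, WithLp.toLp_smul, add_sub_cancel_left]
  rw [hres]
  exact Matrix.norm_toEuclideanLin_le_of_sum_abs_le _ (by positivity) (sum_abs_hopping_le hγ Λ)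
    (fun t => by simpa only [hopping_comm] using sum_abs_hopping_le hγ Λ t) _

theorem unif_apply (s : Set ℝ) : unif s = 2⁻¹ * volume (s ∩ Set.Icc (-1) 1) := by
  rw [unif, Measure.smul_apply, Measure.restrict_apply' measurableSet_Icc, ENNReal.smul_def,
    smul_eq_mul, ENNReal.coe_inv two_ne_zero, ENNReal.coe_ofNat]

theorem volume_setOf_sq_mem_Icc_le {a h : ℝ} (ha : 0 ≤ a) (hh : 0 ≤ h) :
    volume {b : ℝ | a ≤ b ^ 2 ∧ b ^ 2 ≤ a + h} ≤ ENNReal.ofReal (2 * √h) := by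
  have hsub : {b : ℝ | a ≤ b ^ 2 ∧ b ^ 2 ≤ a + h} ⊆
      Set.Icc (-√(a + h)) (-√a) ∪ Set.Icc (√a) (√(a + h)) := by
    rintro b ⟨hlo, hhi⟩
    have hlo' : √a ≤ |b| := Real.sqrt_sq_eq_abs b ▸ Real.sqrt_le_sqrt hlo
    have hhi' : |b| ≤ √(a + h) := Real.abs_le_sqrt hhi
    rcases le_or_gt 0 b with hb | hb
    · rw [abs_of_nonneg hb] at hlo' hhi'; exact Or.inr ⟨hlo', hhi'⟩
    · rw [abs_of_neg hb] at hlo' hhi'; exact Or.inl ⟨by linarith, by linarith⟩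
  have hmono : √a ≤ √(a + h) := Real.sqrt_le_sqrt (by linarith)
  have hroot : √(a + h) - √a ≤ √h := by
    rw [sub_le_iff_le_add, Real.sqrt_le_left (by positivity)]
    nlinarith [Real.sq_sqrt ha, Real.sq_sqrt hh, Real.sqrt_nonneg a, Real.sqrt_nonneg h]
  calc volume {b : ℝ | a ≤ b ^ 2 ∧ b ^ 2 ≤ a + h}
      ≤ volume (Set.Icc (-√(a + h)) (-√a)) + volume (Set.Icc (√a) (√(a + h))) :=
        (measure_mono hsub).trans (measure_union_le _ _)
    _ ≤ ENNReal.ofReal (2 * √h) := by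
        rw [Real.volume_Icc, Real.volume_Icc, ← ENNReal.ofReal_add (by linarith) (by linarith)]
        exact ENNReal.ofReal_le_ofReal (by linarith)

theorem unif_setOf_abs_sqrt_one_add_sq_sub_le (c : ℝ) {ε : ℝ} (hε : 0 ≤ ε) :
    unif {b : ℝ | |√(1 + b ^ 2) - c| ≤ ε} ≤ ENNReal.ofReal √(6 * ε) := by
  -- on `[-1, 1]`, `g = √(1 + b²) ∈ [1, 3/2]` is confined to `[m, m + 2ε]`,
  -- so `b² = g² - 1` lies in `[m² - 1, m² - 1 + 2ε (g + m)]`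
  set m := max (c - ε) 1
  have hm : 1 ≤ m := le_max_right _ _
  have hsub : {b : ℝ | |√(1 + b ^ 2) - c| ≤ ε} ∩ Set.Icc (-1) 1 ⊆
      {b : ℝ | m ^ 2 - 1 ≤ b ^ 2 ∧ b ^ 2 ≤ m ^ 2 - 1 + 6 * ε} := by
    rintro b ⟨hb, hb₁⟩
    rw [Set.mem_ofPred_eq, abs_le] at hb
    obtain ⟨hb₁, hb₂⟩ := hb₁
    set g := √(1 + b ^ 2)
    have hg : g ^ 2 = 1 + b ^ 2 := Real.sq_sqrt (by positivity)
    have hg₁ : 1 ≤ g := Real.one_le_sqrt.2 (by nlinarith)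
    have hmg : m ≤ g := max_le (by linarith) hg₁
    have hgm : g - m ≤ 2 * ε := by linarith [le_max_left (c - ε) 1]
    have hg₂ : g ≤ 3 / 2 := by nlinarith
    constructor
    · nlinarith
    · nlinarith [mul_le_mul_of_nonneg_right hgm (by linarith : (0 : ℝ) ≤ g + m)]
  calc unif {b : ℝ | |√(1 + b ^ 2) - c| ≤ ε}
      ≤ 2⁻¹ * ENNReal.ofReal (2 * √(6 * ε)) := by
        rw [unif_apply]
        gcongr
        exact (measure_mono hsub).trans
          (volume_setOf_sq_mem_Icc_le (by nlinarith) (by positivity))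
    _ = ENNReal.ofReal √(6 * ε) := by
        rw [ENNReal.ofReal_mul zero_le_two, ENNReal.ofReal_ofNat,
          ENNReal.inv_mul_cancel_left two_ne_zero ENNReal.ofNat_ne_top]

theorem unifPi_map_pair {ι : Type*} [Fintype ι] {x y : ι} (hxy : x ≠ y) :
    (unifPi ι).map (fun u => (u x, u y)) = unif.prod unif := by
  have hind := (iIndepFun_pi (μ := fun _ : ι => unif) (X := fun _ => id)
    fun _ => aemeasurable_id).indepFun hxy
  rw [unifPi, hind.map_prod_eq_prod_map_map (measurable_pi_apply x).aemeasurable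
    (measurable_pi_apply y).aemeasurable, (measurePreserving_eval (fun _ => unif) x).map_eq,
    (measurePreserving_eval (fun _ => unif) y).map_eq]

theorem unifPi_pair_mem_le {ι : Type*} [Fintype ι] {x y : ι} (hxy : x ≠ y) {S : Set (ℝ × ℝ)}
    (hS : MeasurableSet S) {p : ENNReal} (hp : ∀ a, unif (Prod.mk a ⁻¹' S) ≤ p) :
    unifPi ι {u | (u x, u y) ∈ S} ≤ p := by
  change unifPi ι ((fun u => (u x, u y)) ⁻¹' S) ≤ p
  rw [← Measure.map_apply (by fun_prop) hS, unifPi_map_pair hxy, Measure.prod_apply hS]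
  calc ∫⁻ a, unif (Prod.mk a ⁻¹' S) ∂unif ≤ ∫⁻ _, p ∂unif := lintegral_mono hp
    _ = p := by simp

theorem unifPi_abs_sqrt_one_add_sq_sub_le {ι : Type*} [Fintype ι] {x y : ι} (hxy : x ≠ y)
    {ε : ℝ} (hε : 0 ≤ ε) :
    unifPi ι {u | |√(1 + u x ^ 2) - √(1 + u y ^ 2)| ≤ ε} ≤ ENNReal.ofReal √(6 * ε) :=
  unifPi_pair_mem_le hxy (S := {p | |√(1 + p.1 ^ 2) - √(1 + p.2 ^ 2)| ≤ ε})
    (measurableSet_le (by fun_prop) measurable_const) fun a => by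
      simpa only [Set.preimage_ofPred_eq, abs_sub_comm √(1 + a ^ 2)] using
        unif_setOf_abs_sqrt_one_add_sq_sub_le √(1 + a ^ 2) hε

theorem measure_setOf_exists_ne_le {ι α : Type*} [Fintype ι] [MeasurableSpace α]
    (μ : Measure α) (E : ι → ι → Set α) {p : ENNReal} (hp : Pairwise fun x y => μ (E x y) ≤ p) :
    μ {a | ∃ x y, x ≠ y ∧ a ∈ E x y} ≤ Fintype.card ι ^ 2 * p := by
  have hunion : {a | ∃ x y, x ≠ y ∧ a ∈ E x y} = ⋃ x, ⋃ y, ⋃ (_ : x ≠ y), E x y := by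
    ext; simp
  calc μ {a | ∃ x y, x ≠ y ∧ a ∈ E x y} ≤ ∑ x, ∑ y, μ (⋃ (_ : x ≠ y), E x y) := by
        rw [hunion]
        exact (measure_iUnion_fintype_le _ _).trans
          (Finset.sum_le_sum fun x _ => measure_iUnion_fintype_le _ _)
    _ ≤ ∑ _x : ι, ∑ _y : ι, p := by
        gcongr with x _ y
        by_cases hxy : x = y
        · simp [hxy]
        · simpa [hxy] using hp hxy
    _ = Fintype.card ι ^ 2 * p := by simp [sq, mul_assoc]

theorem four_mul_mul_le_of_rpow_quarter_lt {K γ δ : ℝ} (hK : 1 ≤ K) (hγ : 0 ≤ γ)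
    (hγ₀ : γ ≤ (16 * K)⁻¹ ^ 4) (hδ : γ ^ ((1 : ℝ) / 4) / 4 < δ) : 4 * K * γ ≤ δ := by
  -- with `a = γ^(1/4) ≤ (16K)⁻¹`: `4Kγ = (4Ka³) a ≤ a / 4 < δ`
  set a := γ ^ ((1 : ℝ) / 4)
  have ha : 0 ≤ a := by positivity
  have hγa : γ = a ^ 4 := by
    simp only [a, one_div]
    exact_mod_cast (Real.rpow_inv_natCast_pow (n := 4) hγ (by norm_num)).symm
  have haK : a ≤ (16 * K)⁻¹ := by
    calc a ≤ ((16 * K)⁻¹ ^ 4) ^ ((1 : ℝ) / 4) := Real.rpow_le_rpow hγ hγ₀ (by norm_num)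
      _ = (16 * K)⁻¹ := by
        rw [one_div]
        exact_mod_cast Real.pow_rpow_inv_natCast (n := 4) (by positivity) (by norm_num)
  have hKa : 16 * K * a ≤ 1 := by
    calc 16 * K * a ≤ 16 * K * (16 * K)⁻¹ := by gcongr
      _ = 1 := mul_inv_cancel₀ (by positivity)
  have ha₁ : a ≤ 1 := by nlinarith
  rw [hγa]
  nlinarith [mul_le_mul_of_nonneg_right hKa (pow_nonneg ha 3),
    pow_le_pow_of_le_one ha ha₁ (by norm_num : 1 ≤ 3)]

theorem minimum_level_spacing_macroscopic_general (d : ℕ) :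
    ∃ γ₀ : ℝ, 0 < γ₀ ∧
      ∀ γ : ℝ, 0 < γ → γ ≤ γ₀ →
      ∀ Λ : Finset (Fin d → ℤ), (∃ a b', Λ = Finset.Icc a b') →
      ∀ hherm : ∀ u : {x // x ∈ Λ} → ℝ, (Ham d γ Λ u).IsHermitian,
      ∀ δ : ℝ, γ ^ ((1 : ℝ) / 4) / 4 < δ → δ ≤ 1 →
      unifPi {x // x ∈ Λ}
          {u | ∃ α β : {x // x ∈ Λ} × Fin 2, α ≠ β ∧
            |(hherm u).eigenvalues α - (hherm u).eigenvalues β| < δ} ≤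
        ENNReal.ofReal (3 * Real.sqrt δ * (Λ.card : ℝ) ^ 2) := by
  refine ⟨(16 * 3 ^ d)⁻¹ ^ 4, by positivity, fun γ hγ hγ₀ Λ _ hherm δ hγδ hδ₁ => ?_⟩
  have hδ : 0 < δ := lt_of_le_of_lt (by positivity) hγδ
  have hcoupling : 4 * 3 ^ d * γ ≤ δ :=
    four_mul_mul_le_of_rpow_quarter_lt (one_le_pow₀ (by norm_num)) hγ.le hγ₀ hγδ
  set ε := δ + 2 * (3 ^ d * γ)
  have hbad : {u | ∃ α β : {x // x ∈ Λ} × Fin 2, α ≠ β ∧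
      |(hherm u).eigenvalues α - (hherm u).eigenvalues β| < δ} ⊆
      {u | ∃ x y, x ≠ y ∧ u ∈ {u | |√(1 + u x ^ 2) - √(1 + u y ^ 2)| ≤ ε}} := by
    rintro u ⟨α, β, hαβ, hlt⟩
    by_contra hgood
    refine (ham_pairwise_lt_abs_eigenvalues_sub hγ.le hδ.le (by linarith)
      (fun x y hxy => ?_) (hherm u) hαβ).not_gt hlt
    exact lt_of_not_ge fun h => hgood ⟨x, y, hxy, h⟩
  have hε : √(6 * ε) ≤ 3 * √δ := by
    rw [Real.sqrt_le_left (by positivity), mul_pow, Real.sq_sqrt hδ.le]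
    linarith
  calc _ ≤ Fintype.card {x // x ∈ Λ} ^ 2 * ENNReal.ofReal √(6 * ε) :=
        (measure_mono hbad).trans (measure_setOf_exists_ne_le _ _ fun x y hxy =>
          unifPi_abs_sqrt_one_add_sq_sub_le hxy (by positivity))
    _ ≤ ENNReal.ofReal (3 * √δ * (Λ.card : ℝ) ^ 2) := by
        rw [Fintype.card_coe, ENNReal.ofReal_mul (by positivity),
          ENNReal.ofReal_pow (by positivity), ENNReal.ofReal_natCast, mul_comm]
        gcongr

/-- macroscopic level spacing. There is `γ₀ > 0` such that for all
`0 < γ ≤ γ₀`, every rectangle `Λ`, and every `δ` with `γ^{1/4}/4 < δ ≤ 1`, the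
probability that two eigenvalues of `H(u)` (counted with multiplicity) are within `δ`
of each other is at most `3·√δ·|Λ|²`. -/
theorem minimum_level_spacing_macroscopic (d : ℕ) (hd : 1 ≤ d) :
    ∃ γ₀ : ℝ, 0 < γ₀ ∧
      ∀ γ : ℝ, 0 < γ → γ ≤ γ₀ →
      ∀ Λ : Finset (Fin d → ℤ), (∃ a b', Λ = Finset.Icc a b') →
      ∀ hherm : ∀ u : {x // x ∈ Λ} → ℝ, (Ham d γ Λ u).IsHermitian,
      ∀ δ : ℝ, γ ^ ((1 : ℝ) / 4) / 4 < δ → δ ≤ 1 →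
      unifPi {x // x ∈ Λ}
          {u | ∃ α β : {x // x ∈ Λ} × Fin 2, α ≠ β ∧
            |(hherm u).eigenvalues α - (hherm u).eigenvalues β| < δ} ≤
        ENNReal.ofReal (3 * Real.sqrt δ * (Λ.card : ℝ) ^ 2) :=
  minimum_level_spacing_macroscopic_general d
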